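/- arXiv:1908.11042 — 4 statements merged into one kernel-verified Lean document; each statement's English description precedes it below -/
import Mathlib

section
/- Well-separation of critical times: for every α ≥ 1 there exist constants C ≥ 1 and c > 0 such that the following holds. Let η, ξ > 0 satisfy α⁻¹ξ ≤ η ≤ αξ, let k, n ≥ 1 be integers with η ≥ (2k+1)k and ξ ≥ (2n+1)n, and suppose t ∈ I_{k,η} ∩ I_{n,ξ}. Then C⁻¹·n ≤ k ≤ C·n, and moreover at least one of the following holds: (a) k = n; (b) |t − η/k| ≥ η/(10αk²) and |t − ξ/n| ≥ ξ/(10αn²); (c) |η − ξ| ≥ c·η/n. -/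
set_option maxHeartbeats 4000000

/-- well-separation of critical times: for every `α ≥ 1` there exist `C ≥ 1`
and `c > 0` such that whenever `η, ξ > 0` with `α⁻¹ξ ≤ η ≤ αξ`, `k, n ≥ 1` are integers
with `η ≥ (2k+1)k` and `ξ ≥ (2n+1)n`, and `t ∈ I_{k,η} ∩ I_{n,ξ}`
(where `I_{m,η} = [2η/(2m+1), 2η/(2m−1)]`), then `C⁻¹ n ≤ k ≤ C n` and at least one of:
(a) `k = n`; (b) `|t − η/k| ≥ η/(10αk²)` and `|t − ξ/n| ≥ ξ/(10αn²)`;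
(c) `|η − ξ| ≥ c·η/n`. -/
theorem stmt2 (α : ℝ) (hα : 1 ≤ α) :
    ∃ C c : ℝ, 1 ≤ C ∧ 0 < c ∧
      ∀ η ξ : ℝ, 0 < η → 0 < ξ → α⁻¹ * ξ ≤ η → η ≤ α * ξ →
      ∀ k n : ℕ, 1 ≤ k → 1 ≤ n →
        ((2 * (k : ℝ) + 1) * k) ≤ η → ((2 * (n : ℝ) + 1) * n) ≤ ξ →
      ∀ t : ℝ,
        t ∈ Set.Icc (2 * η / (2 * (k : ℝ) + 1)) (2 * η / (2 * (k : ℝ) - 1)) →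
        t ∈ Set.Icc (2 * ξ / (2 * (n : ℝ) + 1)) (2 * ξ / (2 * (n : ℝ) - 1)) →
        (C⁻¹ * (n : ℝ) ≤ (k : ℝ) ∧ (k : ℝ) ≤ C * (n : ℝ)) ∧
        (k = n ∨
          (η / (10 * α * (k : ℝ) ^ 2) ≤ |t - η / (k : ℝ)| ∧
            ξ / (10 * α * (n : ℝ) ^ 2) ≤ |t - ξ / (n : ℝ)|) ∨
          c * η / (n : ℝ) ≤ |η - ξ|) := by
  have hα0 : (0:ℝ) < α := by linarith
  refine ⟨3 * α, 1/8, by nlinarith, by norm_num, ?_⟩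
  intro η ξ hη hξ hηξ1 hηξ2 k n hk hn hkη hnξ t ht1 ht2
  obtain ⟨hta, htb⟩ := ht1
  obtain ⟨htc, htd⟩ := ht2
  set K : ℝ := (k : ℝ) with hKdef
  set N : ℝ := (n : ℝ) with hNdef
  have hK : (1:ℝ) ≤ K := Nat.one_le_cast.2 hk
  have hN : (1:ℝ) ≤ N := Nat.one_le_cast.2 hn
  have hK1 : (0:ℝ) < 2*K - 1 := by linarith
  have hK2 : (0:ℝ) < 2*K + 1 := by linarith
  have hN1 : (0:ℝ) < 2*N - 1 := by linarith
  have hN2 : (0:ℝ) < 2*N + 1 := by linarith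
  have hN0 : (0:ℝ) < N := by linarith
  have hK0 : (0:ℝ) < K := by linarith
  have ht1' : 2*η ≤ t*(2*K+1) := by
    rw [div_le_iff₀ hK2] at hta; linarith
  have ht2' : t*(2*K-1) ≤ 2*η := by
    rw [le_div_iff₀ hK1] at htb; linarith
  have ht3' : 2*ξ ≤ t*(2*N+1) := by
    rw [div_le_iff₀ hN2] at htc; linarith
  have ht4' : t*(2*N-1) ≤ 2*ξ := by
    rw [le_div_iff₀ hN1] at htd; linarith
  have htpos : 0 < t := by nlinarith
  have hξα : ξ ≤ α * η := by
    rwa [inv_mul_le_iff₀ hα0] at hηξ1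
  -- cross inequalities
  have hA : η*(2*N-1) ≤ ξ*(2*K+1) := by
    nlinarith [mul_le_mul_of_nonneg_right ht1' hN1.le,
      mul_le_mul_of_nonneg_right ht4' hK2.le]
  have hB : ξ*(2*K-1) ≤ η*(2*N+1) := by
    nlinarith [mul_le_mul_of_nonneg_right ht3' hK1.le,
      mul_le_mul_of_nonneg_right ht2' hN2.le]
  constructor
  · constructor
    · rw [inv_mul_le_iff₀ (by positivity)]
      -- N ≤ 3αK  from  η(2N-1) ≤ ξ(2K+1) ≤ αη(2K+1)
      have s1 : η*(2*N-1) ≤ η*(α*(2*K+1)) := by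
        nlinarith [mul_le_mul_of_nonneg_right hξα (by linarith : (0:ℝ) ≤ 2*K+1), hA]
      have s2 : 2*N-1 ≤ α*(2*K+1) := le_of_mul_le_mul_left s1 hη
      nlinarith [mul_nonneg (by linarith : (0:ℝ) ≤ α - 1) (by linarith : (0:ℝ) ≤ K - 1),
        mul_nonneg (by linarith : (0:ℝ) ≤ α) (by linarith : (0:ℝ) ≤ K - 1)]
    · -- K ≤ 3αN  from  ξ(2K-1) ≤ η(2N+1) ≤ αξ(2N+1)
      have s1 : ξ*(2*K-1) ≤ ξ*(α*(2*N+1)) := by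
        nlinarith [mul_le_mul_of_nonneg_right hηξ2 (by linarith : (0:ℝ) ≤ 2*N+1), hB]
      have s2 : 2*K-1 ≤ α*(2*N+1) := le_of_mul_le_mul_left s1 hξ
      nlinarith [mul_nonneg (by linarith : (0:ℝ) ≤ α - 1) (by linarith : (0:ℝ) ≤ N - 1),
        mul_nonneg (by linarith : (0:ℝ) ≤ α) (by linarith : (0:ℝ) ≤ N - 1)]
  by_cases hkn : k = n
  · exact Or.inl hkn
  by_cases hc : 1/8 * η / N ≤ |η - ξ|
  · exact Or.inr (Or.inr hc)
  push_neg at hc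
  rw [abs_lt] at hc
  obtain ⟨hc1, hc2⟩ := hc
  have hU : 8*N*ξ < 8*N*η + η := by
    rw [neg_lt, lt_div_iff₀ hN0] at hc1
    linarith
  have hL : 8*N*η < 8*N*ξ + η := by
    rw [lt_div_iff₀ hN0] at hc2
    linarith
  right; left
  rcases Nat.lt_or_ge k n with hlt | hge
  · -- k < n : show n = k + 1
    have hn1 : n = k + 1 := by
      by_contra h
      have h2 : k + 2 ≤ n := by omega
      have h2' : K + 2 ≤ N := by
        rw [hKdef, hNdef]; exact_mod_cast h2
      have hA2 : η*(2*N-1) ≤ ξ*(2*N-3) := by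
        linarith [hA, mul_nonneg hξ.le (by linarith : (0:ℝ) ≤ (2*N-3)-(2*K+1))]
      linarith [mul_le_mul_of_nonneg_left hA2 (by linarith : (0:ℝ) ≤ 8*N),
        mul_le_mul_of_nonneg_right hU.le (by linarith : (0:ℝ) ≤ 2*N-3),
        mul_nonneg hη.le (by linarith : (0:ℝ) ≤ N - 1)]
    have hNK : N = K + 1 := by rw [hNdef, hKdef, hn1]; push_cast; ring
    rw [hNK] at ht3' ht4' hU hL
    -- key1 : 10 K² t ≤ (10K-1) η
    have sT : t*(2*K+1)*(8*(K+1)) ≤ (16*K+18)*η := by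
      linarith [mul_le_mul_of_nonneg_right ht4' (by linarith : (0:ℝ) ≤ 8*(K+1)), hU]
    have key1 : 10*K^2*t ≤ (10*K-1)*η := by
      have s4 : 10*K^2*t*((2*K+1)*(8*(K+1))) ≤ (10*K-1)*η*((2*K+1)*(8*(K+1))) := by
        linarith [mul_le_mul_of_nonneg_left sT (by positivity : (0:ℝ) ≤ 10*K^2),
          mul_nonneg (mul_nonneg hη.le (by linarith : (0:ℝ) ≤ K-1)) hK0.le,
          mul_nonneg hη.le (by linarith : (0:ℝ) ≤ K-1)]
      exact le_of_mul_le_mul_right s4 (by positivity)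
    -- key2 : (10(K+1)+1) ξ ≤ 10 (K+1)² t
    have sS : 16*(K+1)*ξ ≤ (8*K+9)*(t*(2*K+1)) := by
      linarith [mul_le_mul_of_nonneg_left ht1' (by linarith : (0:ℝ) ≤ 8*K+9), hU]
    have key2 : (10*(K+1)+1)*ξ ≤ 10*(K+1)^2*t := by
      have s4 : (10*(K+1)+1)*ξ*(16*(K+1)) ≤ 10*(K+1)^2*t*(16*(K+1)) := by
        linarith [mul_le_mul_of_nonneg_left sS (by linarith : (0:ℝ) ≤ 10*K+11),
          mul_nonneg (mul_nonneg htpos.le (by linarith : (0:ℝ) ≤ K-1)) hK0.le,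
          mul_nonneg htpos.le (by linarith : (0:ℝ) ≤ K-1), htpos.le]
      exact le_of_mul_le_mul_right s4 (by positivity)
    constructor
    · -- η / (10 α K²) ≤ |t - η/K|
      have h1 : η/(10*α*K^2) ≤ η/(10*K^2) := by
        apply div_le_div_of_nonneg_left hη.le (by positivity)
        nlinarith [sq_nonneg K]
      have h2 : η/(10*K^2) ≤ η/K - t := by
        rw [div_le_iff₀ (by positivity : (0:ℝ) < 10*K^2)]
        have heq : (η/K - t) * (10*K^2) = 10*K*η - 10*K^2*t := by
          field_simp
        rw [heq]; linarith
      have h3 : η/K - t ≤ |t - η/K| := by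
        rw [abs_sub_comm]; exact le_abs_self _
      linarith
    · -- ξ / (10 α N²) ≤ |t - ξ/N|
      rw [hNK]
      have h1 : ξ/(10*α*(K+1)^2) ≤ ξ/(10*(K+1)^2) := by
        apply div_le_div_of_nonneg_left hξ.le (by positivity)
        nlinarith [sq_nonneg (K+1)]
      have h2 : ξ/(10*(K+1)^2) ≤ t - ξ/(K+1) := by
        rw [div_le_iff₀ (by positivity : (0:ℝ) < 10*(K+1)^2)]
        have heq : (t - ξ/(K+1)) * (10*(K+1)^2) = 10*(K+1)^2*t - 10*(K+1)*ξ := by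
          field_simp
        rw [heq]; linarith
      have h3 : t - ξ/(K+1) ≤ |t - ξ/(K+1)| := le_abs_self _
      linarith
  · -- n < k : show k = n + 1
    have hk1 : k = n + 1 := by
      by_contra h
      have h2 : n + 2 ≤ k := by omega
      have h2' : N + 2 ≤ K := by
        rw [hKdef, hNdef]; exact_mod_cast h2
      have hB2 : ξ*(2*N+3) ≤ η*(2*N+1) := by
        linarith [hB, mul_nonneg hξ.le (by linarith : (0:ℝ) ≤ (2*K-1)-(2*N+3))]
      linarith [mul_le_mul_of_nonneg_right hB2 (by linarith : (0:ℝ) ≤ 8*N-1),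
        mul_le_mul_of_nonneg_right hL.le (by linarith : (0:ℝ) ≤ 2*N+1),
        mul_nonneg hξ.le (by linarith : (0:ℝ) ≤ N - 1)]
    have hKN : K = N + 1 := by rw [hNdef, hKdef, hk1]; push_cast; ring
    rw [hKN] at ht1' ht2'
    -- key3 : (10(N+1)+1) η ≤ 10 (N+1)² t
    have sT : (16*N-2)*η ≤ 8*N*(t*(2*N+1)) := by
      linarith [mul_le_mul_of_nonneg_left ht3' (by linarith : (0:ℝ) ≤ 4*N), hL]
    have key3 : (10*(N+1)+1)*η ≤ 10*(N+1)^2*t := by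
      have s4 : (10*(N+1)+1)*η*(16*N-2) ≤ 10*(N+1)^2*t*(16*N-2) := by
        linarith [mul_le_mul_of_nonneg_left sT (by linarith : (0:ℝ) ≤ 10*N+11),
          mul_nonneg (mul_nonneg htpos.le (by linarith : (0:ℝ) ≤ N-1)) hN0.le,
          mul_nonneg htpos.le (by linarith : (0:ℝ) ≤ N-1), htpos.le]
      exact le_of_mul_le_mul_right s4 (by linarith)
    -- key4 : 10 N² t ≤ (10N-1) ξ
    have sT2 : t*(2*N+1)*(8*N*(8*N-1)) ≤ 128*N^2*ξ := by
      linarith [mul_le_mul_of_nonneg_right ht2' (by nlinarith [hN] : (0:ℝ) ≤ 8*N*(8*N-1)),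
        mul_le_mul_of_nonneg_left hL.le (by linarith : (0:ℝ) ≤ 16*N)]
    have key4 : 10*N^2*t ≤ (10*N-1)*ξ := by
      have s4 : 10*N^2*t*((2*N+1)*(8*N*(8*N-1))) ≤ (10*N-1)*ξ*((2*N+1)*(8*N*(8*N-1))) := by
        linarith [mul_le_mul_of_nonneg_left sT2 (by positivity : (0:ℝ) ≤ 10*N^2),
          mul_nonneg (mul_nonneg (mul_nonneg hξ.le (by linarith : (0:ℝ) ≤ N-1)) hN0.le) hN0.le,
          mul_nonneg (mul_nonneg hξ.le (by linarith : (0:ℝ) ≤ N-1)) hN0.le,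
          mul_nonneg hξ.le hN0.le]
      have hpos : (0:ℝ) < (2*N+1)*(8*N*(8*N-1)) :=
        mul_pos hN2 (mul_pos (by linarith) (by linarith))
      exact le_of_mul_le_mul_right s4 hpos
    constructor
    · rw [hKN]
      have h1 : η/(10*α*(N+1)^2) ≤ η/(10*(N+1)^2) := by
        apply div_le_div_of_nonneg_left hη.le (by positivity)
        nlinarith [sq_nonneg (N+1)]
      have h2 : η/(10*(N+1)^2) ≤ t - η/(N+1) := by
        rw [div_le_iff₀ (by positivity : (0:ℝ) < 10*(N+1)^2)]
        have heq : (t - η/(N+1)) * (10*(N+1)^2) = 10*(N+1)^2*t - 10*(N+1)*η := by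
          field_simp
        rw [heq]; linarith
      have h3 : t - η/(N+1) ≤ |t - η/(N+1)| := le_abs_self _
      linarith
    · have h1 : ξ/(10*α*N^2) ≤ ξ/(10*N^2) := by
        apply div_le_div_of_nonneg_left hξ.le (by positivity)
        nlinarith [sq_nonneg N]
      have h2 : ξ/(10*N^2) ≤ ξ/N - t := by
        rw [div_le_iff₀ (by positivity : (0:ℝ) < 10*N^2)]
        have heq : (ξ/N - t) * (10*N^2) = 10*N*ξ - 10*N^2*t := by
          field_simp
        rw [heq]; linarith
      have h3 : ξ/N - t ≤ |t - ξ/N| := by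
        rw [abs_sub_comm]; exact le_abs_self _
      linarith
end

section
/- Total growth bound for the multiplier w: for every β ∈ (0,1/2] there exists a constant C ≥ 1, independent of ν, η and t, such that for all ν ∈ (0,1], all real η ≥ 3 and all t ≥ 0, one has 1 ≤ w(t,η) ≤ C. -/
/-- Japanese bracket `⟨x⟩ = (1+x²)^{1/2}`. -/
noncomputable def jap (x : ℝ) : ℝ := Real.sqrt (1 + x ^ 2)

/-- Critical time `t_{m,η} = 2η/(2m+1)` (with the convention `t_{0,η} = 2η`). -/
noncomputable def tcrit (m : ℕ) (η : ℝ) : ℝ := 2 * η / (2 * (m : ℝ) + 1)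

/-- `D⁻_{m,η} = η/((2m+1)m)`. -/
noncomputable def Dminus (m : ℕ) (η : ℝ) : ℝ := η / ((2 * (m : ℝ) + 1) * (m : ℝ))

/-- The toy-model growth factor
`g_m(τ,η) = exp(⟨ν^{1/3}t_{m,η}⟩^{−(1+β)} (ν^{1/3}η/m²)(arctan τ + arctan D⁻_{m,η}))`. -/
noncomputable def gm (ν β : ℝ) (m : ℕ) (η τ : ℝ) : ℝ :=
  Real.exp ((jap (ν ^ ((1:ℝ)/3) * tcrit m η)) ^ (-(1 + β)) *
    (ν ^ ((1:ℝ)/3) * η / (m : ℝ) ^ 2) * (Real.arctan τ + Real.arctan (Dminus m η)))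

/-- `E(√η)`: the largest positive integer `E` with `(2E+1)E ≤ η`. -/
noncomputable def Esq (η : ℝ) : ℕ := sSup {E : ℕ | 1 ≤ E ∧ ((2 * (E : ℝ) + 1) * (E : ℝ)) ≤ η}

/-! With `A = ν^{1/3} η`, the exponent of `g_m` on `I_{m,η}` is at most `π` times
`⟨ν^{1/3} t_{m,η}⟩^{-(1+β)} A / m²`, and since `⟨ν^{1/3} t_{m,η}⟩ ≥ max 1 (2A/(3m))` this is at
most `π min (A/m², 3 m^{β-1} A^{-β})`. Across the intervals the factors multiply, so `w` stays
between `1` and `exp (π ∑_m min (A/m², 3 m^{β-1} A^{-β}))`. For `m ≤ A` the second bound sums to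
at most `3 A^{-β} A^β / β`, for `m > A` the first sums to at most `2`, whence
`C = exp (π (3/β + 2))`. -/

open Finset Real

lemma mul_rpow_sub_one_le_rpow_sub_rpow {β x : ℝ} (hβ0 : 0 ≤ β) (hβ1 : β ≤ 1) (hx : 0 ≤ x) :
    β * (x + 1) ^ (β - 1) ≤ (x + 1) ^ β - x ^ β := by
  have hy : 0 < x + 1 := by linarith
  have hbern : (x / (x + 1)) ^ β ≤ 1 + β * -(x + 1)⁻¹ := by
    have h := rpow_one_add_le_one_add_mul_self
      (show -1 ≤ -(x + 1)⁻¹ by rw [neg_le_neg_iff]; exact inv_le_one_of_one_le₀ (by linarith))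
      hβ0 hβ1
    rwa [show 1 + -(x + 1)⁻¹ = x / (x + 1) by field_simp; ring] at h
  rw [div_rpow hx hy.le, div_le_iff₀ (by positivity)] at hbern
  rw [rpow_sub_one hy.ne']
  linarith [show (1 + β * -(x + 1)⁻¹) * (x + 1) ^ β = (x + 1) ^ β - β * ((x + 1) ^ β / (x + 1))
    by ring]

lemma sum_Ioc_rpow_sub_one_le {β : ℝ} (hβ0 : 0 < β) (hβ1 : β ≤ 1) (M : ℕ) :
    ∑ j ∈ Ioc 0 M, (j : ℝ) ^ (β - 1) ≤ (M : ℝ) ^ β / β := by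
  induction M with
  | zero => simp [zero_rpow hβ0.ne']
  | succ M ih =>
    rw [sum_Ioc_succ_top M.zero_le, Nat.cast_succ]
    have := mul_rpow_sub_one_le_rpow_sub_rpow hβ0.le hβ1 M.cast_nonneg
    calc _ ≤ (M : ℝ) ^ β / β + ((M + 1 : ℝ) ^ β - (M : ℝ) ^ β) / β := by
          gcongr; rwa [le_div_iff₀ hβ0, mul_comm]
      _ = _ := by ring

noncomputable def gmExpBound (β A : ℝ) (m : ℕ) : ℝ :=
  min (A / (m : ℝ) ^ 2) (3 * (m : ℝ) ^ (β - 1) * A ^ (-β))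

lemma sum_Ioc_gmExpBound_le {β A : ℝ} (hβ0 : 0 < β) (hβ1 : β ≤ 1) (hA : 0 < A) (N : ℕ) :
    ∑ j ∈ Ioc 0 N, gmExpBound β A j ≤ 3 / β + 2 := by
  set M := ⌊A⌋₊
  rw [← sum_filter_add_sum_filter_not _ (· ≤ M)]
  have hhead : ∑ j ∈ Ioc 0 N with j ≤ M, gmExpBound β A j ≤ 3 / β :=
    calc ∑ j ∈ Ioc 0 N with j ≤ M, gmExpBound β A j
        ≤ ∑ j ∈ Ioc 0 M, 3 * (j : ℝ) ^ (β - 1) * A ^ (-β) := by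
          refine sum_le_sum_of_subset_of_nonneg (fun j hj => ?_) (fun j _ _ => by positivity)
            |>.trans' (sum_le_sum fun j _ => min_le_right _ _)
          simp only [mem_filter, mem_Ioc] at hj ⊢
          omega
      _ = 3 * A ^ (-β) * ∑ j ∈ Ioc 0 M, (j : ℝ) ^ (β - 1) := by
          rw [mul_sum]; exact sum_congr rfl fun j _ => by ring
      _ ≤ 3 * A ^ (-β) * ((M : ℝ) ^ β / β) := by
          gcongr; exact sum_Ioc_rpow_sub_one_le hβ0 hβ1 M
      _ ≤ 3 * A ^ (-β) * (A ^ β / β) := by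
          gcongr; exact Nat.floor_le hA.le
      _ = 3 / β := by
          rw [rpow_neg hA.le]; field_simp [(rpow_pos_of_pos hA β).ne']
  have htail : ∑ j ∈ Ioc 0 N with ¬j ≤ M, gmExpBound β A j ≤ 2 :=
    calc ∑ j ∈ Ioc 0 N with ¬j ≤ M, gmExpBound β A j
        ≤ ∑ j ∈ Ioo M (N + 1), A * ((j : ℝ) ^ 2)⁻¹ := by
          refine sum_le_sum_of_subset_of_nonneg (fun j hj => ?_) (fun j _ _ => by positivity)
            |>.trans' (sum_le_sum fun j _ => (min_le_left _ _).trans_eq (div_eq_mul_inv _ _))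
          simp only [mem_filter, mem_Ioc, mem_Ioo] at hj ⊢
          omega
      _ ≤ A * (2 / (M + 1)) := by
          rw [← mul_sum]; gcongr; exact sum_Ioo_inv_sq_le M (N + 1)
      _ ≤ 2 := by
          rw [mul_div_assoc', div_le_iff₀ (by positivity)]
          nlinarith [Nat.lt_floor_add_one A]
  linarith

lemma one_le_jap (x : ℝ) : 1 ≤ jap x :=
  one_le_sqrt.mpr (by nlinarith [sq_nonneg x])

lemma le_jap (x : ℝ) : x ≤ jap x :=
  (le_abs_self x).trans ((sqrt_sq_eq_abs x).symm.le.trans (sqrt_le_sqrt (by linarith)))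

lemma rpow_neg_one_add_mul_div_sq_le {β A y m : ℝ} (hβ0 : 0 ≤ β) (hβ1 : β ≤ 1) (hA : 0 < A)
    (hm : 0 < m) (hy : 2 * A / (3 * m) ≤ y) :
    y ^ (-(1 + β)) * (A / m ^ 2) ≤ 3 * m ^ (β - 1) * A ^ (-β) := by
  have hc : 0 < 2 * A / (3 * m) := by positivity
  calc y ^ (-(1 + β)) * (A / m ^ 2) ≤ (2 * A / (3 * m)) ^ (-(1 + β)) * (A / m ^ 2) := by
        gcongr ?_ * _
        exact rpow_le_rpow_of_nonpos hc hy (by linarith)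
    _ = (3 / 2) ^ (1 + β) * m ^ (β - 1) * A ^ (-β) := by
        rw [show 2 * A / (3 * m) = (3 / 2 * m / A)⁻¹ by field_simp, inv_rpow (by positivity),
          rpow_neg (by positivity), inv_inv, div_rpow (by positivity) hA.le,
          mul_rpow (by norm_num) hm.le, rpow_add hm, rpow_add hA, rpow_one, rpow_one,
          rpow_sub_one hm.ne', rpow_neg hA.le]
        field_simp
    _ ≤ (3 / 2) ^ (2 : ℝ) * m ^ (β - 1) * A ^ (-β) := by
        gcongr
        · norm_num
        · linarith
    _ ≤ 3 * m ^ (β - 1) * A ^ (-β) := by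
        gcongr; norm_num

lemma tcrit_antitone {η : ℝ} (hη : 0 ≤ η) : Antitone (tcrit · η) := fun a b hab => by
  change 2 * η / (2 * (b : ℝ) + 1) ≤ 2 * η / (2 * (a : ℝ) + 1)
  gcongr

lemma tcrit_zero (η : ℝ) : tcrit 0 η = 2 * η := by
  simp [tcrit]

lemma tcrit_sub_one {m : ℕ} (hm : 0 < m) (η : ℝ) :
    tcrit (m - 1) η = 2 * η / (2 * (m : ℝ) - 1) := by
  rw [tcrit, Nat.cast_sub hm, Nat.cast_one]
  ring_nf

lemma tcrit_sub_div_eq_neg_Dminus {m : ℕ} (hm : 0 < m) (η : ℝ) :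
    tcrit m η - η / m = -Dminus m η := by
  have : (0 : ℝ) < m := Nat.cast_pos.mpr hm
  rw [tcrit, Dminus]
  field_simp
  ring

lemma arctan_add_arctan_mem_Icc {a b : ℝ} (hab : -a ≤ b) :
    0 ≤ arctan b + arctan a ∧ arctan b + arctan a ≤ π := by
  have := arctan_strictMono.monotone hab
  rw [arctan_neg] at this
  constructor <;> linarith [arctan_lt_pi_div_two a, arctan_lt_pi_div_two b]

lemma one_le_gm_and_gm_le_exp {ν β η τ : ℝ} {m : ℕ} (hν : 0 < ν) (hβ0 : 0 ≤ β) (hβ1 : β ≤ 1)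
    (hη : 0 < η) (hm : 0 < m) (hτ : -Dminus m η ≤ τ) :
    1 ≤ gm ν β m η τ ∧ gm ν β m η τ ≤ exp (π * gmExpBound β (ν ^ ((1 : ℝ) / 3) * η) m) := by
  set A := ν ^ ((1 : ℝ) / 3) * η
  have hA : 0 < A := by positivity
  have hm' : (0 : ℝ) < m := Nat.cast_pos.mpr hm
  set x := ν ^ ((1 : ℝ) / 3) * tcrit m η
  have hx : 2 * A / (3 * m) ≤ x := by
    rw [show x = 2 * A / (2 * m + 1) by simp only [x, A, tcrit]; ring]
    gcongr
    linarith [show (1 : ℝ) ≤ m by exact_mod_cast hm]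
  have hcoeff : jap x ^ (-(1 + β)) * (A / (m : ℝ) ^ 2) ≤ gmExpBound β A m := by
    refine le_min ?_ (rpow_neg_one_add_mul_div_sq_le hβ0 hβ1 hA hm' (hx.trans (le_jap x)))
    exact mul_le_of_le_one_left (by positivity)
      (rpow_le_one_of_one_le_of_nonpos (one_le_jap x) (by linarith))
  obtain ⟨harc0, harcπ⟩ := arctan_add_arctan_mem_Icc hτ
  have hcoeff0 : 0 ≤ jap x ^ (-(1 + β)) * (A / (m : ℝ) ^ 2) :=
    mul_nonneg (rpow_nonneg (zero_le_one.trans (one_le_jap x)) _) (by positivity)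
  refine ⟨one_le_exp (mul_nonneg hcoeff0 harc0), exp_le_exp.mpr ?_⟩
  calc _ ≤ jap x ^ (-(1 + β)) * (A / (m : ℝ) ^ 2) * π := by gcongr
    _ ≤ π * gmExpBound β A m := by rw [mul_comm]; gcongr

lemma one_le_and_le_prod_of_eq_mul {s : ℕ → ℝ} (hs : Antitone s) {f : ℝ → ℝ} {g : ℕ → ℝ → ℝ}
    {b : ℕ → ℝ} {E : ℕ} (hbase : f (s E) = 1)
    (hf : ∀ m, 0 < m → m ≤ E → ∀ t ∈ Set.Icc (s m) (s (m - 1)), f t = f (s m) * g m t)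
    (hg : ∀ m, 0 < m → m ≤ E → ∀ t ∈ Set.Icc (s m) (s (m - 1)), 1 ≤ g m t ∧ g m t ≤ b m)
    {n : ℕ} (hn : n ≤ E) :
    ∀ t ∈ Set.Icc (s E) (s n), 1 ≤ f t ∧ f t ≤ ∏ j ∈ Ioc n E, b j := by
  induction hn using Nat.decreasingInduction with
  | self =>
    intro t ht
    rw [le_antisymm ht.2 ht.1, hbase, Ioc_self, prod_empty]
    exact ⟨le_rfl, le_rfl⟩
  | of_succ k hk ih =>
    intro t ht
    have hmem : s (k + 1) ∈ Set.Icc (s (k + 1)) (s (k + 1 - 1)) :=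
      ⟨le_rfl, hs (Nat.sub_le _ _)⟩
    obtain ⟨hf1, hfP⟩ := ih (s (k + 1)) ⟨hs hk, le_rfl⟩
    have hb : 1 ≤ b (k + 1) :=
      let ⟨hg1, hgb⟩ := hg (k + 1) k.succ_pos hk _ hmem
      hg1.trans hgb
    rw [← prod_Ioc_consecutive _ k.le_succ hk, Nat.Ioc_succ_singleton, prod_singleton]
    rcases le_total t (s (k + 1)) with htk | htk
    · obtain ⟨ht1, htP⟩ := ih t ⟨ht.1, htk⟩
      exact ⟨ht1, htP.trans (le_mul_of_one_le_left (by linarith) hb)⟩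
    · have ht' : t ∈ Set.Icc (s (k + 1)) (s (k + 1 - 1)) := ⟨htk, ht.2⟩
      obtain ⟨hg1, hgb⟩ := hg (k + 1) k.succ_pos hk t ht'
      rw [hf (k + 1) k.succ_pos hk t ht', mul_comm (b _)]
      exact ⟨one_le_mul_of_one_le_of_one_le hf1 hg1, mul_le_mul hfP hgb (by linarith) (by linarith)⟩

/-- total growth bound for the multiplier `w`: for every `β ∈ (0,1/2]` there
is a constant `C ≥ 1`, independent of `ν`, `η` and `t`, such that for all `ν ∈ (0,1]`,
every function `w` built by the recursive definition (equal to `1` for `t ≤ t(η)`,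
multiplied by `g_m(t − η/m, η)` across each resonant interval `I_{m,η}`, and constant for
`t ≥ 2η`), all `η ≥ 3` and all `t ≥ 0`, one has `1 ≤ w(t,η) ≤ C`. -/
theorem stmt3 (β : ℝ) (hβ0 : 0 < β) (hβ1 : β ≤ 1/2) :
    ∃ C : ℝ, 1 ≤ C ∧
      ∀ ν : ℝ, 0 < ν → ν ≤ 1 →
      ∀ w : ℝ → ℝ → ℝ,
        (∀ η : ℝ, 3 ≤ η → ∀ t : ℝ, 0 ≤ t → t ≤ tcrit (Esq η) η → w t η = 1) →
        (∀ η : ℝ, 3 ≤ η → ∀ m : ℕ, 1 ≤ m → m ≤ Esq η →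
          ∀ t : ℝ, tcrit m η ≤ t → t ≤ 2 * η / (2 * (m : ℝ) - 1) →
            w t η = w (tcrit m η) η * gm ν β m η (t - η / (m : ℝ))) →
        (∀ η : ℝ, 3 ≤ η → ∀ t : ℝ, 2 * η ≤ t → w t η = w (2 * η) η) →
        ∀ η : ℝ, 3 ≤ η → ∀ t : ℝ, 0 ≤ t → 1 ≤ w t η ∧ w t η ≤ C := by
  refine ⟨exp (π * (3 / β + 2)), one_le_exp (by positivity), ?_⟩
  intro ν hν _ w hinit hstep hconst η hη t ht
  have hη0 : 0 < η := by linarith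
  wlog ht2 : t ≤ 2 * η generalizing t
  · rw [hconst η hη t (by linarith)]
    exact this (2 * η) (by positivity) le_rfl
  rcases le_total t (tcrit (Esq η) η) with htE | htE
  · rw [hinit η hη t ht htE]
    exact ⟨le_rfl, one_le_exp (by positivity)⟩
  have hw := one_le_and_le_prod_of_eq_mul (tcrit_antitone hη0.le) (f := (w · η))
    (g := fun m t => gm ν β m η (t - η / m))
    (b := fun m => exp (π * gmExpBound β (ν ^ ((1 : ℝ) / 3) * η) m))
    (hinit η hη _ (by unfold tcrit; positivity) le_rfl)
    (fun m hm hmE t ht => hstep η hη m hm hmE t ht.1 (tcrit_sub_one hm η ▸ ht.2))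
    (fun m hm _ t ht => one_le_gm_and_gm_le_exp hν hβ0.le (by linarith) hη0 hm
      (by linarith [tcrit_sub_div_eq_neg_Dminus hm η, ht.1]))
    (Nat.zero_le _) t ⟨htE, tcrit_zero η ▸ ht2⟩
  refine ⟨hw.1, hw.2.trans ?_⟩
  rw [← exp_sum, ← mul_sum]
  gcongr
  exact sum_Ioc_gmExpBound_le hβ0 (by linarith) (by positivity) _
end

section
/- For every β ∈ (0,1/2] there exists a constant C, independent of ν and η, such that for all ν ∈ (0,1] and all real η ≥ 3, the sum over the resonant modes satisfies ∑_{m=1}^{E(√η)} (ν^{1/3} η / m²) · ⟨ν^{1/3} t_{m,η}⟩^{−(1+β)} ≤ C. -/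
/-!
Write `s = ν^{1/3} η`, so that the `m`-th term is `(s/m²) ⟨2s/(2m+1)⟩^{-(1+β)}`. For `m ≤ s`,
`⟨x⟩ ≥ x` bounds it by `2^{1+β} s^{-β} m^{β-1}`, and `∑_{m ≤ s} m^{β-1} ≤ s^β/β` (concavity of
`x ↦ x^β`, i.e. Bernoulli's inequality), giving `2^{1+β}/β`. For `m > s`, `⟨x⟩ ≥ 1` bounds it by
`s/m²`, and `∑_{m > ⌊s⌋} 1/m² ≤ 2/(⌊s⌋+1) ≤ 2/s`, giving `2`. Neither bound depends on `s` or on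
the number of terms.
-/

open Finset Real

lemma mul_rpow_sub_one_mul_le_rpow_sub_rpow {x y β : ℝ} (hx : 0 ≤ x) (hxy : x ≤ y)
    (hβ0 : 0 ≤ β) (hβ1 : β ≤ 1) : β * y ^ (β - 1) * (y - x) ≤ y ^ β - x ^ β := by
  rcases (hx.trans hxy).eq_or_lt with hy | hy
  · obtain rfl : x = 0 := le_antisymm (hy ▸ hxy) hx
    simp [← hy]
  -- Bernoulli's inequality `(1 + t)^β ≤ 1 + β t` at `t = x / y - 1`
  have hB := rpow_one_add_le_one_add_mul_self (s := x / y - 1)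
    (by linarith [div_nonneg hx hy.le]) hβ0 hβ1
  rw [add_sub_cancel, div_rpow hx hy.le, div_le_iff₀ (rpow_pos_of_pos hy β)] at hB
  have hy' : y ^ β = y ^ (β - 1) * y := by rw [← rpow_add_one hy.ne']; ring_nf
  rw [hy'] at hB ⊢
  have hexpand : (1 + β * (x / y - 1)) * (y ^ (β - 1) * y) =
      y ^ (β - 1) * y - β * y ^ (β - 1) * (y - x) := by
    field_simp
    ring
  linarith

lemma sum_Icc_rpow_sub_one_le {β : ℝ} (hβ0 : 0 < β) (hβ1 : β ≤ 1) (K : ℕ) :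
    ∑ m ∈ Icc 1 K, (m : ℝ) ^ (β - 1) ≤ (K : ℝ) ^ β / β := by
  induction K with
  | zero => simp [zero_rpow hβ0.ne']
  | succ K ih =>
    rw [le_div_iff₀ hβ0] at ih
    rw [sum_Icc_succ_top (by omega), le_div_iff₀ hβ0]
    have step := mul_rpow_sub_one_mul_le_rpow_sub_rpow (K.cast_nonneg : (0:ℝ) ≤ K)
      (by linarith : (K : ℝ) ≤ K + 1) hβ0.le hβ1
    push_cast
    linarith

/-- The summand of the theorem in the variable `s = ν^{1/3} η`, so `ν^{1/3} t_{m,η} = 2s/(2m+1)`. -/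
noncomputable def resonantTerm (β s : ℝ) (m : ℕ) : ℝ :=
  s / (m : ℝ) ^ 2 * jap (2 * s / (2 * m + 1)) ^ (-(1 + β))

section resonantTerm

variable {β s : ℝ}

lemma resonantTerm_nonneg (hs : 0 ≤ s) (m : ℕ) : 0 ≤ resonantTerm β s m :=
  mul_nonneg (by positivity) (rpow_nonneg (zero_le_one.trans (one_le_jap _)) _)

lemma resonantTerm_le_div_sq (hβ : 0 ≤ 1 + β) (hs : 0 ≤ s) (m : ℕ) :
    resonantTerm β s m ≤ s / (m : ℝ) ^ 2 :=
  mul_le_of_le_one_right (by positivity)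
    (rpow_le_one_of_one_le_of_nonpos (one_le_jap _) (by linarith))

lemma resonantTerm_le_rpow (hβ : 0 ≤ 1 + β) (hs : 0 < s) {m : ℕ} (hm : 1 ≤ m) :
    resonantTerm β s m ≤ 2 ^ (1 + β) * s ^ (-β) * (m : ℝ) ^ (β - 1) := by
  have hm1 : (1 : ℝ) ≤ m := by exact_mod_cast hm
  have hm0 : (0 : ℝ) < m := by linarith
  have hjap : s / (2 * m) ≤ jap (2 * s / (2 * m + 1)) := by
    refine le_trans ?_ (le_jap _)
    rw [div_le_div_iff₀ (by positivity) (by positivity)]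
    nlinarith [mul_le_mul_of_nonneg_left hm1 hs.le]
  calc resonantTerm β s m ≤ s / (m : ℝ) ^ 2 * (s / (2 * m)) ^ (-(1 + β)) :=
        mul_le_mul_of_nonneg_left (rpow_le_rpow_of_nonpos (by positivity) hjap (by linarith))
          (by positivity)
    _ = s / (m : ℝ) ^ 2 * ((2 * m) ^ (1 + β) / (s * s ^ β)) := by
        rw [rpow_neg (by positivity), div_rpow hs.le (by positivity), inv_div,
          rpow_add hs, rpow_one]
    _ = 2 ^ (1 + β) * s ^ (-β) * (m : ℝ) ^ (β - 1) := by
        rw [mul_rpow zero_le_two hm0.le, rpow_neg hs.le, rpow_sub_one hm0.ne',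
          rpow_add hm0, rpow_one]
        field_simp

lemma sum_Icc_resonantTerm_le_rpow (hβ0 : 0 < β) (hβ1 : β ≤ 1) (hs : 0 < s) {K : ℕ}
    (hK : (K : ℝ) ≤ s) : ∑ m ∈ Icc 1 K, resonantTerm β s m ≤ 2 ^ (1 + β) / β := by
  have hsK : s ^ (-β) * (K : ℝ) ^ β ≤ 1 := by
    rw [rpow_neg hs.le, inv_mul_le_one₀ (rpow_pos_of_pos hs β)]
    exact rpow_le_rpow K.cast_nonneg hK hβ0.le
  calc ∑ m ∈ Icc 1 K, resonantTerm β s m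
      ≤ ∑ m ∈ Icc 1 K, 2 ^ (1 + β) * s ^ (-β) * (m : ℝ) ^ (β - 1) :=
        sum_le_sum fun m hm ↦ resonantTerm_le_rpow (by linarith) hs (mem_Icc.mp hm).1
    _ = 2 ^ (1 + β) * s ^ (-β) * ∑ m ∈ Icc 1 K, (m : ℝ) ^ (β - 1) := (mul_sum ..).symm
    _ ≤ 2 ^ (1 + β) * s ^ (-β) * ((K : ℝ) ^ β / β) := by
        gcongr
        exact sum_Icc_rpow_sub_one_le hβ0 hβ1 K
    _ = 2 ^ (1 + β) / β * (s ^ (-β) * (K : ℝ) ^ β) := by ring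
    _ ≤ 2 ^ (1 + β) / β := mul_le_of_le_one_right (by positivity) hsK

lemma sum_Ioo_resonantTerm_le_two (hβ : 0 ≤ 1 + β) (hs : 0 ≤ s) {K : ℕ} (hK : s < K + 1)
    (N : ℕ) : ∑ m ∈ Ioo K N, resonantTerm β s m ≤ 2 := by
  calc ∑ m ∈ Ioo K N, resonantTerm β s m ≤ ∑ m ∈ Ioo K N, s * ((m : ℝ) ^ 2)⁻¹ :=
        sum_le_sum fun m _ ↦ (resonantTerm_le_div_sq hβ hs m).trans_eq (div_eq_mul_inv ..)
    _ = s * ∑ m ∈ Ioo K N, ((m : ℝ) ^ 2)⁻¹ := (mul_sum ..).symm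
    _ ≤ s * (2 / (K + 1)) := by gcongr; exact sum_Ioo_inv_sq_le K N
    _ ≤ 2 := by
        rw [mul_div_assoc', div_le_iff₀ (by positivity)]
        linarith

theorem sum_Icc_resonantTerm_le (hβ0 : 0 < β) (hβ1 : β ≤ 1) (hs : 0 < s) (N : ℕ) :
    ∑ m ∈ Icc 1 N, resonantTerm β s m ≤ 2 ^ (1 + β) / β + 2 := by
  -- `K = ⌊s⌋₊` is where the bounds `resonantTerm_le_rpow` and `resonantTerm_le_div_sq` cross over.
  set K := ⌊s⌋₊
  have hsplit : Icc 1 N ⊆ Icc 1 K ∪ Ioo K (N + 1) := by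
    intro m; simp only [mem_union, mem_Icc, mem_Ioo]; omega
  have hdisj : Disjoint (Icc 1 K) (Ioo K (N + 1)) := by
    rw [disjoint_left]; intro m; simp only [mem_Icc, mem_Ioo]; omega
  calc ∑ m ∈ Icc 1 N, resonantTerm β s m
      ≤ ∑ m ∈ Icc 1 K ∪ Ioo K (N + 1), resonantTerm β s m :=
        sum_le_sum_of_subset_of_nonneg hsplit fun m _ _ ↦ resonantTerm_nonneg hs.le m
    _ = ∑ m ∈ Icc 1 K, resonantTerm β s m + ∑ m ∈ Ioo K (N + 1), resonantTerm β s m :=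
        sum_union hdisj
    _ ≤ 2 ^ (1 + β) / β + 2 := add_le_add
        (sum_Icc_resonantTerm_le_rpow hβ0 hβ1 hs (Nat.floor_le hs.le))
        (sum_Ioo_resonantTerm_le_two (by linarith) hs.le (Nat.lt_floor_add_one s) _)

end resonantTerm

/-- for every `β ∈ (0,1/2]` there exists a constant `C`, independent of `ν`
and `η`, such that for all `ν ∈ (0,1]` and all real `η ≥ 3`,
`∑_{m=1}^{E(√η)} (ν^{1/3}η/m²) ⟨ν^{1/3}t_{m,η}⟩^{−(1+β)} ≤ C`. -/
theorem stmt4 (β : ℝ) (hβ0 : 0 < β) (hβ1 : β ≤ 1/2) :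
    ∃ C : ℝ, 0 < C ∧
      ∀ ν : ℝ, 0 < ν → ν ≤ 1 → ∀ η : ℝ, 3 ≤ η →
        ∑ m ∈ Finset.Icc 1 (Esq η),
          (ν ^ ((1:ℝ)/3) * η / (m : ℝ) ^ 2) *
            (jap (ν ^ ((1:ℝ)/3) * tcrit m η)) ^ (-(1 + β)) ≤ C := by
  refine ⟨2 ^ (1 + β) / β + 2, by positivity, fun ν hν _ η hη ↦ ?_⟩
  have hs : 0 < ν ^ ((1:ℝ)/3) * η := mul_pos (rpow_pos_of_pos hν _) (by linarith)
  have hterm (m : ℕ) : ν ^ ((1:ℝ)/3) * η / (m : ℝ) ^ 2 *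
      jap (ν ^ ((1:ℝ)/3) * tcrit m η) ^ (-(1 + β)) = resonantTerm β (ν ^ ((1:ℝ)/3) * η) m := by
    rw [resonantTerm, tcrit, mul_div_assoc', mul_left_comm]
  simp only [hterm]
  exact sum_Icc_resonantTerm_le hβ0 (by linarith) hs _
end

section
/- For all ν ∈ (0,1], all β ∈ (0,1/2], every integer k ≥ 1, every real η ≥ (2k+1)k and every real t, one has ⟨ν^{1/3} t_{k,η}⟩^{−(1+β)} · (ν^{1/3} η/k²) · (1 + (t − η/k)²)^{−1} ≤ 2/k. -/
/-- for all `ν ∈ (0,1]`, all `β ∈ (0,1/2]`, every integer `k ≥ 1`, every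
real `η ≥ (2k+1)k` and every real `t`,
`⟨ν^{1/3}t_{k,η}⟩^{−(1+β)}·(ν^{1/3}η/k²)·(1+(t−η/k)²)^{−1} ≤ 2/k`. -/
theorem stmt17 (ν β : ℝ) (hν0 : 0 < ν) (hν1 : ν ≤ 1) (hβ0 : 0 < β) (hβ1 : β ≤ 1/2)
    (k : ℕ) (hk : 1 ≤ k) (η : ℝ) (hη : (2 * (k : ℝ) + 1) * (k : ℝ) ≤ η) (t : ℝ) :
    (jap (ν ^ ((1:ℝ)/3) * tcrit k η)) ^ (-(1 + β)) * (ν ^ ((1:ℝ)/3) * η / (k : ℝ) ^ 2) *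
      (1 + (t - η / (k : ℝ)) ^ 2)⁻¹ ≤ 2 / (k : ℝ) := by
  have hk1 : (1:ℝ) ≤ (k : ℝ) := by exact_mod_cast hk
  have hη0 : (0:ℝ) < η := lt_of_lt_of_le (by nlinarith) hη
  set c : ℝ := ν ^ ((1:ℝ)/3) with hc
  have hc0 : 0 < c := Real.rpow_pos_of_pos hν0 _
  set a : ℝ := c * tcrit k η with hadef
  have ha0 : 0 < a := by
    have : 0 < tcrit k η := by
      unfold tcrit; positivity
    exact mul_pos hc0 this
  have hja : a ≤ jap a := by
    unfold jap
    calc a = Real.sqrt (a ^ 2) := by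
          rw [Real.sqrt_sq ha0.le]
      _ ≤ Real.sqrt (1 + a ^ 2) := Real.sqrt_le_sqrt (by linarith)
  have h1 : 1 ≤ jap a := by
    unfold jap
    nlinarith [Real.sq_sqrt (show (0:ℝ) ≤ 1 + a ^ 2 by positivity),
      Real.sqrt_nonneg (1 + a ^ 2), sq_nonneg a]
  have hja0 : 0 < jap a := lt_of_lt_of_le one_pos h1
  have key1 : (jap a) ^ (-(1 + β)) ≤ (jap a) ^ (-(1:ℝ)) :=
    Real.rpow_le_rpow_of_exponent_le h1 (by linarith)
  have key2 : (jap a) ^ (-(1:ℝ)) ≤ a⁻¹ := by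
    rw [Real.rpow_neg_one]
    exact inv_anti₀ ha0 hja
  have hbig : (jap a) ^ (-(1 + β)) ≤ a⁻¹ := key1.trans key2
  have hd : (0:ℝ) < 1 + (t - η / (k : ℝ)) ^ 2 := by positivity
  have hd1 : (1 + (t - η / (k : ℝ)) ^ 2)⁻¹ ≤ 1 := by
    exact inv_le_one_of_one_le₀ (by nlinarith [sq_nonneg (t - η / (k : ℝ))])
  have hpos2 : 0 ≤ c * η / (k : ℝ) ^ 2 := by positivity
  have hstep : (jap a) ^ (-(1 + β)) * (c * η / (k : ℝ) ^ 2) *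
      (1 + (t - η / (k : ℝ)) ^ 2)⁻¹ ≤ a⁻¹ * (c * η / (k : ℝ) ^ 2) := by
    calc (jap a) ^ (-(1 + β)) * (c * η / (k : ℝ) ^ 2) * (1 + (t - η / (k : ℝ)) ^ 2)⁻¹
        ≤ (jap a) ^ (-(1 + β)) * (c * η / (k : ℝ) ^ 2) * 1 := by
          apply mul_le_mul_of_nonneg_left hd1
          exact mul_nonneg (Real.rpow_nonneg hja0.le _) hpos2
      _ = (jap a) ^ (-(1 + β)) * (c * η / (k : ℝ) ^ 2) := by ring
      _ ≤ a⁻¹ * (c * η / (k : ℝ) ^ 2) := mul_le_mul_of_nonneg_right hbig hpos2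
  have hval : a⁻¹ * (c * η / (k : ℝ) ^ 2) = (2 * (k : ℝ) + 1) / (2 * (k : ℝ) ^ 2) := by
    rw [hadef]; unfold tcrit
    field_simp
  have hfin : (2 * (k : ℝ) + 1) / (2 * (k : ℝ) ^ 2) ≤ 2 / (k : ℝ) := by
    rw [div_le_div_iff₀ (by positivity) (by linarith)]
    nlinarith
  calc (jap a) ^ (-(1 + β)) * (c * η / (k : ℝ) ^ 2) * (1 + (t - η / (k : ℝ)) ^ 2)⁻¹
      ≤ a⁻¹ * (c * η / (k : ℝ) ^ 2) := hstep
    _ = (2 * (k : ℝ) + 1) / (2 * (k : ℝ) ^ 2) := hval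
    _ ≤ 2 / (k : ℝ) := hfin
end
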